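/- arXiv:2303.17805 — 2 statements merged into one kernel-verified Lean document; each statement's English description precedes it below -/
import Mathlib

section
/- For every f ∈ Net_φ(ℝ^d) and every μ₀ ∈ P₂(ℝ^p) with μ̂₀ = Π₂(μ₀), it holds that N(f, μ₀) ≥ inf{ Ŵ₂²(μ̂, μ̂₀) : μ̂ ∈ M⁺(S^{p-1}), f = ∫_{S^{p-1}} φ(θ, ·) dμ̂(θ) }. -/
open MeasureTheory
open scoped ENNReal NNReal RealInnerProductSpace

noncomputable section

variable {p d : ℕ}

abbrev E (p : ℕ) := EuclideanSpace ℝ (Fin p)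

/-- `μ ∈ 𝒫₂(ℝ^p)`: probability measure with finite second moment. -/
def MemP2 (μ : Measure (E p)) : Prop :=
  IsProbabilityMeasure μ ∧ (∫⁻ w, (‖w‖₊ : ℝ≥0∞) ^ 2 ∂μ) < ⊤

/-- Squared 2-Wasserstein distance. -/
def W2sq (μ ν : Measure (E p)) : ℝ :=
  sInf { c | ∃ π : Measure (E p × E p),
      π.map Prod.fst = μ ∧ π.map Prod.snd = ν ∧ c = ∫ q, ‖q.1 - q.2‖ ^ 2 ∂π }

/-- `μ` parameterizes the network `f`. -/
def Realizes (φ : E p → E d → ℝ) (μ : Measure (E p)) (f : E d → ℝ) : Prop :=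
  ∀ x, f x = ∫ w, φ w x ∂μ

/-- `f ∈ Net_φ(ℝ^d)`. -/
def InNet (φ : E p → E d → ℝ) (f : E d → ℝ) : Prop :=
  ∃ μ : Measure (E p), MemP2 μ ∧ Realizes φ μ f

/-- Complexity measure `N(f, μ₀)`. -/
def Ncomp (φ : E p → E d → ℝ) (f : E d → ℝ) (μ₀ : Measure (E p)) : ℝ :=
  sInf { c | ∃ μ : Measure (E p), MemP2 μ ∧ Realizes φ μ f ∧ c = W2sq μ μ₀ }

abbrev Sp (p : ℕ) := Metric.sphere (0 : E p) 1

lemma sphProj_mem (w : E p) (h : w ≠ 0) : ‖w‖⁻¹ • w ∈ Sp p := by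
  have hw : ‖w‖ ≠ 0 := norm_ne_zero_iff.mpr h
  simp [mem_sphere_zero_iff_norm, norm_smul, abs_of_nonneg (norm_nonneg w),
    inv_mul_cancel₀ hw]

open scoped Classical in
/-- `ν = Π₂(μ)`: the 2-homogeneous projection of `μ` onto the sphere. -/
def IsProj2 (μ : Measure (E p)) (ν : Measure (Sp p)) : Prop :=
  ∀ ψ : C(Sp p, ℝ),
    ∫ θ, ψ θ ∂ν =
      ∫ w, ‖w‖ ^ 2 * (if h : w = 0 then 0 else ψ ⟨‖w‖⁻¹ • w, sphProj_mem w h⟩) ∂μ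

/-- Squared Hellinger–Kantorovich distance on `M⁺(S^{p-1})`. -/
def HKsq (ν₁ ν₂ : Measure (Sp p)) : ℝ :=
  sInf { c | ∃ μ₁ μ₂ : Measure (E p), MemP2 μ₁ ∧ MemP2 μ₂ ∧
      IsProj2 μ₁ ν₁ ∧ IsProj2 μ₂ ν₂ ∧ c = W2sq μ₁ μ₂ }

/-- Support of a measure on the sphere. -/
def sphSupport (ν : Measure (Sp p)) : Set (Sp p) :=
  { θ | ∀ U : Set (Sp p), IsOpen U → θ ∈ U → 0 < ν U }

/-- Condition (C): `max_{θ₁} min_{θ₂ ∈ supp ν₀} d(θ₁, θ₂) < π/2` (geodesic distance). -/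
def CondC (ν₀ : Measure (Sp p)) : Prop :=
  ∃ ε : ℝ, ε < Real.pi / 2 ∧
    ∀ θ₁ : Sp p, ∃ θ₂ ∈ sphSupport ν₀, Real.arccos ⟪(θ₁ : E p), (θ₂ : E p)⟫ ≤ ε

end

section Aux

open MeasureTheory
variable {p : ℕ}

lemma W2sq_nonneg' (μ ν : Measure (E p)) : 0 ≤ W2sq μ ν := by
  apply Real.sInf_nonneg
  rintro c ⟨π, -, -, rfl⟩
  exact integral_nonneg fun q => by positivity

lemma HKsq_nonneg' (ν₁ ν₂ : Measure (Sp p)) : 0 ≤ HKsq ν₁ ν₂ := by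
  apply Real.sInf_nonneg
  rintro c ⟨μ₁, μ₂, -, -, -, -, rfl⟩
  exact W2sq_nonneg' μ₁ μ₂

lemma exists_proj2' (hp : 0 < p) (μ : Measure (E p))
    (hμ2 : (∫⁻ w, (‖w‖₊ : ℝ≥0∞) ^ 2 ∂μ) < ⊤) :
    ∃ ν : Measure (Sp p), IsFiniteMeasure ν ∧ IsProj2 μ ν := by
  classical
  haveI : Nonempty (Fin p) := ⟨⟨0, hp⟩⟩
  have hsph : (Metric.sphere (0 : E p) 1).Nonempty :=
    NormedSpace.sphere_nonempty.mpr zero_le_one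
  obtain ⟨θ₀, hθ₀⟩ := hsph
  set F : E p → E p := fun w => if w = 0 then θ₀ else ‖w‖⁻¹ • w with hF
  have hFmem : ∀ w, F w ∈ Metric.sphere (0 : E p) 1 := by
    intro w
    by_cases h : w = 0
    · simp [hF, h, mem_sphere_zero_iff_norm.mp hθ₀]
    · simpa [hF, h] using sphProj_mem w h
  have hFmeas : Measurable F := by
    apply Measurable.ite (measurableSet_singleton 0) measurable_const
    exact ((measurable_norm).inv).smul measurable_id
  set proj : E p → Sp p := fun w => ⟨F w, hFmem w⟩ with hprojdef
  have hproj : Measurable proj := hFmeas.subtype_mk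
  set D : E p → ℝ≥0 := fun w => ‖w‖₊ ^ 2 with hD
  have hDmeas : Measurable D := measurable_nnnorm.pow_const 2
  set ν : Measure (Sp p) := (μ.withDensity fun w => (D w : ℝ≥0∞)).map proj with hν
  have hfin : IsFiniteMeasure ν := by
    constructor
    rw [hν, Measure.map_apply hproj MeasurableSet.univ, Set.preimage_univ,
      withDensity_apply _ MeasurableSet.univ, setLIntegral_univ]
    simpa [hD] using hμ2
  refine ⟨ν, hfin, ?_⟩
  intro ψ
  rw [hν, integral_map hproj.aemeasurable ψ.continuous.aestronglyMeasurable,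
    integral_withDensity_eq_integral_smul hDmeas]
  apply integral_congr_ae
  filter_upwards with w
  by_cases h : w = 0
  · simp [h, hD]
  · have hpw : proj w = ⟨‖w‖⁻¹ • w, sphProj_mem w h⟩ := by
      simp [hprojdef, hF, h]
    rw [hpw]
    simp [h, hD, NNReal.smul_def]

end Aux

/-- Lower bound for the complexity measure via the
Hellinger–Kantorovich distance. For every `f ∈ Net_φ(ℝ^d)` and `μ₀ ∈ 𝒫₂(ℝ^p)`
with `μ̂₀ = Π₂(μ₀)`:
`N(f, μ₀) ≥ inf{ Ŵ₂²(μ̂, μ̂₀) : μ̂ ∈ M⁺(S^{p-1}), f = ∫ φ(θ,·) dμ̂(θ) }`. -/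
theorem stmt3 (p d : ℕ) (hp : 0 < p) (hd : 0 < d) (φ : E p → E d → ℝ)
    (hhomog : ∀ r : ℝ, 0 ≤ r → ∀ w x, φ (r • w) x = r ^ 2 * φ w x)
    (hreg : ∀ x : E d, LocallyLipschitz (fun w => φ w x))
    (f : E d → ℝ) (hf : InNet φ f)
    (μ₀ : Measure (E p)) (hμ₀ : MemP2 μ₀)
    (ν₀ : Measure (Sp p)) (hν₀ : IsProj2 μ₀ ν₀) :
    Ncomp φ f μ₀ ≥
      sInf { c | ∃ ν : Measure (Sp p), IsFiniteMeasure ν ∧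
        (∀ x, f x = ∫ θ : Sp p, φ (θ : E p) x ∂ν) ∧ c = HKsq ν ν₀ } := by
  classical
  rw [ge_iff_le]
  set S := { c | ∃ ν : Measure (Sp p), IsFiniteMeasure ν ∧
    (∀ x, f x = ∫ θ : Sp p, φ (θ : E p) x ∂ν) ∧ c = HKsq ν ν₀ } with hS
  have hSb : BddBelow S := by
    refine ⟨0, ?_⟩
    rintro c ⟨ν, -, -, rfl⟩
    exact HKsq_nonneg' ν ν₀
  obtain ⟨μw, hμw, hrealw⟩ := hf
  rw [Ncomp]
  refine le_csInf ⟨W2sq μw μ₀, ⟨μw, hμw, hrealw, rfl⟩⟩ ?_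
  rintro c ⟨μ, hμP2, hμreal, rfl⟩
  obtain ⟨ν, hνfin, hνproj⟩ := exists_proj2' hp μ hμP2.2
  have hrealν : ∀ x, f x = ∫ θ : Sp p, φ (θ : E p) x ∂ν := by
    intro x
    have hcont : Continuous fun θ : Sp p => φ (θ : E p) x :=
      ((hreg x).continuous).comp continuous_subtype_val
    have hψ := hνproj ⟨fun θ => φ (θ : E p) x, hcont⟩
    simp only [ContinuousMap.coe_mk] at hψ
    rw [hμreal x, hψ]
    apply integral_congr_ae
    filter_upwards with w
    by_cases h : w = 0
    · have h0 : φ (0 : E p) x = 0 := by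
        have := hhomog 0 le_rfl 0 x
        simpa using this
      simp [h, h0]
    · have h1 : φ w x = ‖w‖ ^ 2 * φ (‖w‖⁻¹ • w) x := by
        have := hhomog ‖w‖ (norm_nonneg w) (‖w‖⁻¹ • w) x
        rwa [smul_smul, mul_inv_cancel₀ (norm_ne_zero_iff.mpr h), one_smul] at this
      simp [h, h1]
  have hmem : HKsq ν ν₀ ∈ S := ⟨ν, hνfin, hrealν, rfl⟩
  have h1 : sInf S ≤ HKsq ν ν₀ := csInf_le hSb hmem
  have h2 : HKsq ν ν₀ ≤ W2sq μ μ₀ := by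
    apply csInf_le
    · refine ⟨0, ?_⟩
      rintro c ⟨μ₁, μ₂, -, -, -, -, rfl⟩
      exact W2sq_nonneg' μ₁ μ₂
    · exact ⟨μ, μ₀, hμP2, hμ₀, hνproj, hν₀, rfl⟩
  linarith
end

section
/- Fix x ∈ ℝ^d and define, for w ∈ C_x and h ∈ ℝ^p, the Taylor remainder R(w, h, x) = φ(w + h, x) − φ(w, x) − (∇_w φ(w, x))ᵀ h. Let μ₀ ∈ P₂(ℝ^p) be absolutely continuous with respect to the Lebesgue measure, let α_j → ∞, and let T_j : ℝ^p → ℝ^p be measurable maps with {‖T_j‖_{L²(ℝ^p, μ₀)}} bounded, T_j(w)/α_j → 0 for μ₀-a.e. w, and ‖T_j(w)‖/α_j ≤ g(w) for μ₀-a.e. w for some g ∈ L²(ℝ^p, μ₀). Then ∫_{ℝ^p} R(α_j w, T_j(w)/α_j, x) dμ₀(w) → 0 as j → ∞. -/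
open MeasureTheory
open scoped ENNReal NNReal RealInnerProductSpace

/-!
Write `f = φ(·, x)`. Two-homogeneity upgrades the Lipschitz bound of `f` on the unit ball to
`|f u - f v| ≤ K (‖u‖ + ‖v‖) ‖u - v‖` on all of `ℝ^p`, which bounds `R(α w, T/α)` by
`K (4‖w‖ + g w) ‖T‖` once `α ≥ 1`. Since `C_x` is a cone, the segment from `α w` to `α w + T/α`
stays in `C_x` as soon as `‖T/α²‖ < dist(w, C_xᶜ)`, and there the Hessian bound gives the sharper
`M ‖T/α‖²`, whose integral vanishes by dominated convergence. The set where this fails shrinks to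
a null set (`C_x` has full measure and `T/α² → 0` a.e.), so the `L²` norm of `K (4‖w‖ + g)` on it
tends to zero, and Cauchy–Schwarz against the `L²`-bounded `T_j` finishes.
-/

open Filter Topology Metric Set

section TaylorRemainder

variable {F : Type*} [NormedAddCommGroup F] [NormedSpace ℝ F] {f : F → ℝ} {L : ℝ}

lemma abs_sub_le_of_homogeneous_of_lipschitzOnWith
    (hf : ∀ r : ℝ, 0 ≤ r → ∀ w, f (r • w) = r ^ 2 * f w) {K : ℝ≥0}
    (hK : LipschitzOnWith K f (closedBall 0 1)) (u v : F) :
    |f u - f v| ≤ K * (‖u‖ + ‖v‖) * ‖u - v‖ := by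
  set s := ‖u‖ + ‖v‖
  rcases (by positivity : 0 ≤ s).eq_or_lt with hs | hs
  · have hu : u = 0 := norm_eq_zero.1 (by linarith [norm_nonneg u, norm_nonneg v])
    have hv : v = 0 := norm_eq_zero.1 (by linarith [norm_nonneg u, norm_nonneg v])
    simp [hu, hv]
  have hball : ∀ z : F, ‖z‖ ≤ s → s⁻¹ • z ∈ closedBall (0 : F) 1 := fun z hz => by
    rw [mem_closedBall_zero_iff, norm_smul, norm_inv, Real.norm_of_nonneg hs.le]
    exact inv_mul_le_one_of_le₀ hz hs.le
  have hscale : ∀ z, f z = s ^ 2 * f (s⁻¹ • z) := fun z => by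
    rw [← hf s hs.le, smul_inv_smul₀ hs.ne']
  have hlip := hK.dist_le_mul _ (hball u (by linarith [norm_nonneg v])) _
    (hball v (by linarith [norm_nonneg u]))
  rw [Real.dist_eq, dist_eq_norm, ← smul_sub, norm_smul, norm_inv,
    Real.norm_of_nonneg hs.le] at hlip
  calc |f u - f v| = s ^ 2 * |f (s⁻¹ • u) - f (s⁻¹ • v)| := by
        rw [hscale u, hscale v, ← mul_sub, abs_mul, abs_of_nonneg (by positivity)]
    _ ≤ s ^ 2 * (K * (s⁻¹ * ‖u - v‖)) := by gcongr
    _ = K * s * ‖u - v‖ := by field_simp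

lemma norm_fderiv_le_of_abs_sub_le (hL : 0 ≤ L)
    (hf : ∀ u v, |f u - f v| ≤ L * (‖u‖ + ‖v‖) * ‖u - v‖) (w : F) :
    ‖fderiv ℝ f w‖ ≤ 2 * L * ‖w‖ := by
  have hδ : ∀ δ > 0, ‖fderiv ℝ f w‖ ≤ L * (2 * ‖w‖ + δ) := fun δ hδ => by
    refine norm_fderiv_le_of_lip' ℝ (by positivity) ?_
    filter_upwards [ball_mem_nhds w hδ] with u hu
    have hu' : ‖u‖ ≤ ‖w‖ + δ := by
      linarith [norm_le_norm_add_norm_sub' u w, (mem_ball_iff_norm.1 hu).le]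
    calc ‖f u - f w‖ ≤ L * (‖u‖ + ‖w‖) * ‖u - w‖ := hf u w
      _ ≤ L * (2 * ‖w‖ + δ) * ‖u - w‖ := by gcongr L * ?_ * _; linarith
  have hlim : Tendsto (fun δ => L * (2 * ‖w‖ + δ)) (𝓝[>] 0) (𝓝 (L * (2 * ‖w‖ + 0))) :=
    (Continuous.tendsto (by fun_prop) 0).mono_left nhdsWithin_le_nhds
  have key := ge_of_tendsto hlim (eventually_nhdsWithin_of_forall hδ)
  rw [add_zero] at key
  linarith

lemma abs_sub_sub_fderiv_le_of_abs_sub_le (hL : 0 ≤ L)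
    (hf : ∀ u v, |f u - f v| ≤ L * (‖u‖ + ‖v‖) * ‖u - v‖) (u h : F) :
    |f (u + h) - f u - fderiv ℝ f u h| ≤ L * (4 * ‖u‖ + ‖h‖) * ‖h‖ := by
  have hinc := hf (u + h) u
  rw [add_sub_cancel_left] at hinc
  have hlin : |fderiv ℝ f u h| ≤ 2 * L * ‖u‖ * ‖h‖ :=
    ((fderiv ℝ f u).le_opNorm h).trans (by gcongr; exact norm_fderiv_le_of_abs_sub_le hL hf u)
  calc |f (u + h) - f u - fderiv ℝ f u h| ≤ |f (u + h) - f u| + |fderiv ℝ f u h| := abs_sub _ _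
    _ ≤ L * (‖u + h‖ + 3 * ‖u‖) * ‖h‖ := by linarith
    _ ≤ L * (4 * ‖u‖ + ‖h‖) * ‖h‖ := by gcongr L * ?_ * _; linarith [norm_add_le u h]

lemma abs_sub_sub_fderiv_smul_le_of_abs_sub_le (hL : 0 ≤ L)
    (hf : ∀ u v, |f u - f v| ≤ L * (‖u‖ + ‖v‖) * ‖u - v‖) {α : ℝ} (hα : 1 ≤ α) (w T : F) :
    |f (α • w + α⁻¹ • T) - f (α • w) - fderiv ℝ f (α • w) (α⁻¹ • T)| ≤
      L * (4 * ‖w‖ + ‖α⁻¹ • T‖) * ‖T‖ := by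
  have hα0 : 0 < α := by linarith
  calc _ ≤ L * (4 * ‖α • w‖ + ‖α⁻¹ • T‖) * ‖α⁻¹ • T‖ :=
        abs_sub_sub_fderiv_le_of_abs_sub_le hL hf _ _
    _ = L * (4 * ‖w‖ + α⁻¹ * ‖α⁻¹ • T‖) * ‖T‖ := by
        simp only [norm_smul, norm_inv, Real.norm_of_nonneg hα0.le]
        field_simp
    _ ≤ L * (4 * ‖w‖ + ‖α⁻¹ • T‖) * ‖T‖ := by
        gcongr
        exact mul_le_of_le_one_left (norm_nonneg _) (inv_le_one_of_one_le₀ hα)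

lemma abs_sub_sub_fderiv_le_of_segment_subset {C : Set F} {M : ℝ} (hC : IsOpen C)
    (hf : ContDiffOn ℝ 2 f C) (hM : ∀ u ∈ C, ‖fderiv ℝ (fderiv ℝ f) u‖ ≤ M) {w h : F}
    (hseg : segment ℝ w (w + h) ⊆ C) :
    |f (w + h) - f w - fderiv ℝ f w h| ≤ M * ‖h‖ ^ 2 := by
  have hdf : ∀ u ∈ C, DifferentiableAt ℝ f u := fun u hu =>
    (hf.contDiffAt (hC.mem_nhds hu)).differentiableAt (by norm_num)
  have hdf' : ∀ u ∈ C, DifferentiableAt ℝ (fderiv ℝ f) u := fun u hu =>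
    ((hf.contDiffAt (hC.mem_nhds hu)).fderiv_right (m := 1) (by norm_num)).differentiableAt
      one_ne_zero
  have hw := left_mem_segment ℝ w (w + h)
  have hM0 : 0 ≤ M := (norm_nonneg (fderiv ℝ (fderiv ℝ f) w)).trans (hM w (hseg hw))
  have hD : ∀ u ∈ segment ℝ w (w + h), ‖fderiv ℝ f u - fderiv ℝ f w‖ ≤ M * ‖h‖ := by
    intro u hu
    calc _ ≤ M * ‖u - w‖ := (convex_segment _ _).norm_image_sub_le_of_norm_fderiv_le
          (fun v hv => hdf' v (hseg hv)) (fun v hv => hM v (hseg hv)) hw hu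
      _ ≤ M * ‖h‖ := by
          gcongr
          simpa using norm_sub_le_of_mem_segment hu
  simpa [pow_two, mul_assoc] using (convex_segment _ _).norm_image_sub_le_of_norm_fderiv_le'
    (fun v hv => hdf v (hseg hv)) hD hw (right_mem_segment ℝ w (w + h))

lemma segment_smul_subset_of_enorm_lt_infEDist {C : Set F}
    (hC : ∀ r : ℝ, 0 < r → ∀ w ∈ C, r • w ∈ C) {α : ℝ} (hα : 0 < α) {w h : F}
    (hlt : ‖α⁻¹ • h‖ₑ < infEDist w Cᶜ) : segment ℝ (α • w) (α • w + h) ⊆ C := by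
  rw [segment_eq_image']
  rintro _ ⟨t, ⟨ht0, ht1⟩, rfl⟩
  by_contra hout
  have hout' : w + t • α⁻¹ • h ∉ C := fun hin => hout <| by
    simpa [smul_add, smul_smul, mul_comm α, mul_assoc, hα.ne'] using hC α hα _ hin
  refine hlt.not_ge ((infEDist_le_edist_of_mem hout').trans ?_)
  rw [edist_comm, edist_eq_enorm_sub, add_sub_cancel_left, enorm_smul]
  exact mul_le_of_le_one_left' (by simpa [Real.enorm_of_nonneg ht0] using ht1)

end TaylorRemainder

section Integral

variable {Ω E₁ E₂ : Type*} [MeasurableSpace Ω] {μ : Measure Ω}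
  [NormedAddCommGroup E₁] [NormedAddCommGroup E₂]

lemma tendsto_integral_norm_mul_norm_of_tendsto_integral_sq {u : ℕ → Ω → E₁}
    {v : ℕ → Ω → E₂} {B : ℝ} (hu : ∀ j, MemLp (u j) 2 μ) (hv : ∀ j, MemLp (v j) 2 μ)
    (hlim : Tendsto (fun j => ∫ ω, ‖u j ω‖ ^ 2 ∂μ) atTop (𝓝 0))
    (hB : ∀ j, ∫ ω, ‖v j ω‖ ^ 2 ∂μ ≤ B) :
    Tendsto (fun j => ∫ ω, ‖u j ω‖ * ‖v j ω‖ ∂μ) atTop (𝓝 0) := by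
  have hCS : ∀ j, ∫ ω, ‖u j ω‖ * ‖v j ω‖ ∂μ ≤ √(∫ ω, ‖u j ω‖ ^ 2 ∂μ) * √B := fun j => by
    have hHolder := integral_mul_norm_le_Lp_mul_Lq Real.HolderConjugate.two_two
      (by simpa using (hu j).norm) (by simpa using (hv j).norm)
    simp only [norm_norm, Real.rpow_two] at hHolder
    rw [Real.sqrt_eq_rpow, Real.sqrt_eq_rpow]
    exact hHolder.trans (by gcongr; exact hB j)
  have hlim' : Tendsto (fun j => √(∫ ω, ‖u j ω‖ ^ 2 ∂μ) * √B) atTop (𝓝 0) := by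
    simpa using hlim.sqrt.mul_const √B
  exact squeeze_zero (fun j => integral_nonneg fun ω => by positivity) hCS hlim'

lemma tendsto_integral_of_abs_le_sq_of_notMem_of_abs_le_mul_of_mem {ρ : ℕ → Ω → ℝ}
    {h : ℕ → Ω → E₁} {T : ℕ → Ω → E₂} {S : ℕ → Set Ω} {g G : Ω → ℝ} {M B : ℝ}
    (hh : ∀ j, AEStronglyMeasurable (h j) μ) (hg : MemLp g 2 μ)
    (hhg : ∀ j, ∀ᵐ ω ∂μ, ‖h j ω‖ ≤ g ω) (hh0 : ∀ᵐ ω ∂μ, Tendsto (fun j => h j ω) atTop (𝓝 0))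
    (hS : ∀ j, MeasurableSet (S j)) (hS0 : ∀ᵐ ω ∂μ, ∀ᶠ j in atTop, ω ∉ S j)
    (hG : MemLp G 2 μ) (hT : ∀ j, MemLp (T j) 2 μ) (hTB : ∀ j, ∫ ω, ‖T j ω‖ ^ 2 ∂μ ≤ B)
    (hgood : ∀ᶠ j in atTop, ∀ᵐ ω ∂μ, ω ∉ S j → |ρ j ω| ≤ M * ‖h j ω‖ ^ 2)
    (hbad : ∀ᶠ j in atTop, ∀ᵐ ω ∂μ, ω ∈ S j → |ρ j ω| ≤ G ω * ‖T j ω‖) :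
    Tendsto (fun j => ∫ ω, ρ j ω ∂μ) atTop (𝓝 0) := by
  set b : ℕ → Ω → ℝ := fun j ω => |M| * ‖h j ω‖ ^ 2 + ‖(S j).indicator G ω‖ * ‖T j ω‖
  have hbound : ∀ᶠ j in atTop, ∀ᵐ ω ∂μ, ‖ρ j ω‖ ≤ b j ω := by
    filter_upwards [hgood, hbad] with j hgood hbad
    filter_upwards [hgood, hbad] with ω hgood hbad
    have hM : M * ‖h j ω‖ ^ 2 ≤ |M| * ‖h j ω‖ ^ 2 := by gcongr; exact le_abs_self M
    by_cases hω : ω ∈ S j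
    · simp only [b, indicator_of_mem hω, Real.norm_eq_abs]
      refine (hbad hω).trans (le_add_of_nonneg_of_le (by positivity) ?_)
      gcongr
      exact le_abs_self _
    · simp only [b, indicator_of_notMem hω, Real.norm_eq_abs]
      simpa using (hgood hω).trans hM
  have hhL2 : ∀ j, MemLp (h j) 2 μ := fun j =>
    hg.of_le (hh j) ((hhg j).mono fun ω hω => hω.trans (Real.le_norm_self _))
  have hSL2 : ∀ j, MemLp ((S j).indicator G) 2 μ := fun j => hG.indicator (hS j)
  have hsq : Tendsto (fun j => ∫ ω, |M| * ‖h j ω‖ ^ 2 ∂μ) atTop (𝓝 0) := by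
    refine integral_zero Ω ℝ ▸ tendsto_integral_of_dominated_convergence
      (F := fun j ω => |M| * ‖h j ω‖ ^ 2) (fun ω => |M| * g ω ^ 2)
      (fun j => ((hh j).norm.pow 2).const_mul _) (hg.integrable_sq.const_mul _)
      (fun j => (hhg j).mono fun ω hω => ?_) (hh0.mono fun ω hω => ?_)
    · rw [Real.norm_of_nonneg (by positivity)]
      gcongr
    · simpa using (hω.norm.pow 2).const_mul |M|
  have hind : Tendsto (fun j => ∫ ω, ‖(S j).indicator G ω‖ ^ 2 ∂μ) atTop (𝓝 0) := by
    refine integral_zero Ω ℝ ▸ tendsto_integral_of_dominated_convergence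
      (F := fun j ω => ‖(S j).indicator G ω‖ ^ 2) (fun ω => ‖G ω‖ ^ 2)
      (fun j => (hSL2 j).1.norm.pow 2) hG.norm.integrable_sq
      (fun j => ae_of_all _ fun ω => ?_) (hS0.mono fun ω hω => ?_)
    · rw [Real.norm_of_nonneg (by positivity)]
      gcongr
      exact norm_indicator_le_norm_self G ω
    · refine tendsto_const_nhds.congr' (hω.mono fun j hj => ?_)
      simp [indicator_of_notMem hj]
  have hint₁ : ∀ j, Integrable (fun ω => |M| * ‖h j ω‖ ^ 2) μ := fun j =>
    (hhL2 j).norm.integrable_sq.const_mul _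
  have hint₂ : ∀ j, Integrable (fun ω => ‖(S j).indicator G ω‖ * ‖T j ω‖) μ := fun j =>
    (hSL2 j).norm.integrable_mul (hT j).norm
  have hlim : Tendsto (fun j => ∫ ω, b j ω ∂μ) atTop (𝓝 0) := by
    rw [← add_zero (0 : ℝ)]
    exact (hsq.add (tendsto_integral_norm_mul_norm_of_tendsto_integral_sq hSL2 hT hind hTB)).congr
      fun j => (integral_add (hint₁ j) (hint₂ j)).symm
  refine squeeze_zero_norm' (hbound.mono fun j hj => ?_) hlim
  exact (norm_integral_le_integral_norm _).trans
    (integral_mono_of_nonneg (ae_of_all _ fun _ => norm_nonneg _) ((hint₁ j).add (hint₂ j)) hj)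

end Integral

lemma ae_eventually_enorm_lt_infEDist_compl {X E₁ : Type*} [PseudoEMetricSpace X]
    [MeasurableSpace X] [NormedAddCommGroup E₁] {μ : Measure X} {C : Set X} (hC : IsOpen C) (hCμ : μ Cᶜ = 0)
    {v : ℕ → X → E₁} (hv : ∀ᵐ x ∂μ, Tendsto (fun j => v j x) atTop (𝓝 0)) :
    ∀ᵐ x ∂μ, ∀ᶠ j in atTop, ‖v j x‖ₑ < infEDist x Cᶜ := by
  filter_upwards [ae_iff.2 hCμ, hv] with x hxC hx
  have hpos : 0 < infEDist x Cᶜ := by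
    rwa [infEDist_pos_iff_notMem_closure, hC.isClosed_compl.closure_eq, notMem_compl_iff]
  exact (enorm_zero (E := E₁) ▸ hx.enorm).eventually_lt_const hpos

lemma MemP2.memLp_norm {p : ℕ} {μ : Measure (E p)} (hμ : MemP2 μ) :
    MemLp (fun w : E p => ‖w‖) 2 μ := by
  refine (memLp_two_iff_integrable_sq continuous_norm.aestronglyMeasurable).2
    ⟨(continuous_norm.pow 2).aestronglyMeasurable, ?_⟩
  simpa [HasFiniteIntegral, enorm_pow, enorm_eq_nnnorm] using hμ.2

theorem stmt18_general (p d : ℕ) (φ : E p → E d → ℝ)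
    (hhomog : ∀ r : ℝ, 0 ≤ r → ∀ w x, φ (r • w) x = r ^ 2 * φ w x)
    (hreg : ∀ x : E d, LocallyLipschitz (fun w => φ w x))
    (x : E d) (Cx : Set (E p)) (hopen : IsOpen Cx)
    (hcone : ∀ r : ℝ, 0 < r → ∀ w ∈ Cx, r • w ∈ Cx)
    (hnull : volume Cxᶜ = 0)
    (hC2 : ContDiffOn ℝ 2 (fun w => φ w x) Cx)
    (hhess : ∃ M : ℝ, ∀ w ∈ Cx,
      ‖fderiv ℝ (fun v => fderiv ℝ (fun u => φ u x) v) w‖ ≤ M)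
    (R : E p → E p → ℝ)
    (hR : ∀ w h : E p, R w h =
      φ (w + h) x - φ w x - ⟪gradient (fun u => φ u x) w, h⟫)
    (μ₀ : Measure (E p)) (hμ₀ : MemP2 μ₀) (hac : μ₀ ≪ volume)
    (αj : ℕ → ℝ) (hαjpos : ∀ j, 0 < αj j)
    (hαj : Filter.Tendsto αj Filter.atTop Filter.atTop)
    (Tj : ℕ → E p → E p) (hTjmeas : ∀ j, Measurable (Tj j))
    (hTjbdd : ∃ B : ℝ, ∀ j, (∫ w, ‖Tj j w‖ ^ 2 ∂μ₀) ≤ B)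
    (hTjae : ∀ᵐ w ∂μ₀,
      Filter.Tendsto (fun j => (αj j)⁻¹ • Tj j w) Filter.atTop (nhds 0))
    (g : E p → ℝ) (hg : MemLp g 2 μ₀)
    (hdom : ∀ j, ∀ᵐ w ∂μ₀, ‖Tj j w‖ / αj j ≤ g w) :
    Filter.Tendsto (fun j => ∫ w, R (αj j • w) ((αj j)⁻¹ • Tj j w) ∂μ₀)
      Filter.atTop (nhds 0) := by
  set f : E p → ℝ := fun w => φ w x
  obtain ⟨M, hM⟩ := hhess
  obtain ⟨B, hB⟩ := hTjbdd
  obtain ⟨K, hK⟩ := (hreg x).locallyLipschitzOn.exists_lipschitzOnWith_of_compact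
    (isCompact_closedBall (0 : E p) 1)
  have hquad := abs_sub_le_of_homogeneous_of_lipschitzOnWith (fun r hr w => hhomog r hr w x) hK
  have hRf : ∀ w h, R w h = f (w + h) - f w - fderiv ℝ f w h := fun w h => by
    rw [hR]; exact congrArg _ InnerProductSpace.toDual_symm_apply
  have hnorm : ∀ j w, ‖(αj j)⁻¹ • Tj j w‖ = ‖Tj j w‖ / αj j := fun j w => by
    rw [norm_smul, norm_inv, Real.norm_of_nonneg (hαjpos j).le, inv_mul_eq_div]
  refine tendsto_integral_of_abs_le_sq_of_notMem_of_abs_le_mul_of_mem (M := M) (B := B)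
    (h := fun j w => (αj j)⁻¹ • Tj j w) (T := Tj) (G := fun w => K * (4 * ‖w‖ + g w))
    (S := fun j => {w | infEDist w Cxᶜ ≤ ‖(αj j)⁻¹ • (αj j)⁻¹ • Tj j w‖ₑ})
    ?_ hg ?_ hTjae ?_ ?_ ?_ ?_ hB ?_ ?_
  · exact fun j => ((hTjmeas j).const_smul (αj j)⁻¹).aestronglyMeasurable
  · exact fun j => (hdom j).mono fun w hw => (hnorm j w).trans_le hw
  · exact fun j => measurableSet_le continuous_infEDist.measurable
      (by have := hTjmeas j; fun_prop)
  · refine (ae_eventually_enorm_lt_infEDist_compl hopen (hac hnull)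
      (hTjae.mono fun w hw => ?_)).mono fun w hw => hw.mono fun j hj => not_le.2 hj
    simpa using hαj.inv_tendsto_atTop.smul hw
  · exact (hμ₀.memLp_norm.const_mul 4 |>.add hg).const_mul K
  · exact fun j => (hg.const_mul (αj j)).of_le (hTjmeas j).aestronglyMeasurable
      ((hdom j).mono fun w hw =>
        ((div_le_iff₀' (hαjpos j)).1 hw).trans (Real.le_norm_self _))
  · filter_upwards [hαj.eventually_ge_atTop 1] with j hj
    refine ae_of_all _ fun w hw => ?_
    rw [hRf]
    exact abs_sub_sub_fderiv_le_of_segment_subset hopen hC2 hM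
      (segment_smul_subset_of_enorm_lt_infEDist hcone (hαjpos j) (not_le.1 hw))
  · filter_upwards [hαj.eventually_ge_atTop 1] with j hj
    filter_upwards [hdom j] with w hw _
    rw [hRf]
    refine (abs_sub_sub_fderiv_smul_le_of_abs_sub_le K.coe_nonneg hquad hj w _).trans ?_
    gcongr
    exact (hnorm j w).trans_le hw

/-- Vanishing of the integrated Taylor remainder.
With `R(w, h, x) = φ(w+h, x) − φ(w, x) − ⟨∇_w φ(w, x), h⟩`, for `α_j → ∞` and
maps `T_j` bounded in `L²(μ₀)`, with `T_j(w)/α_j → 0` μ₀-a.e. and dominated by a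
fixed `g ∈ L²(μ₀)`, one has `∫ R(α_j w, T_j(w)/α_j, x) dμ₀(w) → 0`. -/
theorem stmt18 (p d : ℕ) (hp : 0 < p) (hd : 0 < d) (φ : E p → E d → ℝ)
    (hhomog : ∀ r : ℝ, 0 ≤ r → ∀ w x, φ (r • w) x = r ^ 2 * φ w x)
    (hreg : ∀ x : E d, LocallyLipschitz (fun w => φ w x))
    (x : E d) (Cx : Set (E p)) (hopen : IsOpen Cx)
    (hcone : ∀ r : ℝ, 0 < r → ∀ w ∈ Cx, r • w ∈ Cx)
    (hnull : volume Cxᶜ = 0)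
    (hC2 : ContDiffOn ℝ 2 (fun w => φ w x) Cx)
    (hhess : ∃ M : ℝ, ∀ w ∈ Cx,
      ‖fderiv ℝ (fun v => fderiv ℝ (fun u => φ u x) v) w‖ ≤ M)
    (R : E p → E p → ℝ)
    (hR : ∀ w h : E p, R w h =
      φ (w + h) x - φ w x - ⟪gradient (fun u => φ u x) w, h⟫)
    (μ₀ : Measure (E p)) (hμ₀ : MemP2 μ₀) (hac : μ₀ ≪ volume)
    (αj : ℕ → ℝ) (hαjpos : ∀ j, 0 < αj j)
    (hαj : Filter.Tendsto αj Filter.atTop Filter.atTop)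
    (Tj : ℕ → E p → E p) (hTjmeas : ∀ j, Measurable (Tj j))
    (hTjbdd : ∃ B : ℝ, ∀ j, (∫ w, ‖Tj j w‖ ^ 2 ∂μ₀) ≤ B)
    (hTjae : ∀ᵐ w ∂μ₀,
      Filter.Tendsto (fun j => (αj j)⁻¹ • Tj j w) Filter.atTop (nhds 0))
    (g : E p → ℝ) (hg : MemLp g 2 μ₀)
    (hdom : ∀ j, ∀ᵐ w ∂μ₀, ‖Tj j w‖ / αj j ≤ g w) :
    Filter.Tendsto (fun j => ∫ w, R (αj j • w) ((αj j)⁻¹ • Tj j w) ∂μ₀)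
      Filter.atTop (nhds 0) :=
  stmt18_general p d φ hhomog hreg x Cx hopen hcone hnull hC2 hhess R hR μ₀ hμ₀ hac αj hαjpos hαj Tj
    hTjmeas hTjbdd hTjae g hg hdom
end
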